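/- arXiv:2512.09034 — 6 statements merged into one kernel-verified Lean document; each statement's English description precedes it below -/
import Mathlib

section
/- For natural numbers N, k with k < N, the function s ↦ A(N,k,s) := 2^(N-k) * C(k,s) / sqrt(C(N,s) * C(N,k-s)) is monotone increasing on s ∈ {0,...,⌊k/2⌋}: if 2(s+1) ≤ k then A(N,k,s) ≤ A(N,k,s+1). -/
/-!
Squaring removes the square root, and Pascal's ratio identities give
`A(s+1)² (s+1)(N-s) = A(s)² (k-s)(N-k+s+1)`. The pairs `(s+1, N-s)` and `(k-s, N-k+s+1)` both
sum to `N+1`, and the second is the more balanced one as soon as `2s+1 ≤ k ≤ N`, so it has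
the larger product.
-/

/-- A(N,k,s) = 2^(N-k) * C(k,s) / sqrt(C(N,s) * C(N,k-s)) -/
noncomputable def A (N k s : ℕ) : ℝ :=
  2 ^ (N - k) * (Nat.choose k s : ℝ) /
    Real.sqrt ((Nat.choose N s : ℝ) * (Nat.choose N (k - s) : ℝ))

theorem succ_mul_sub_le_sub_mul {N k s : ℕ} (hk : k ≤ N) (hs : 2 * s + 1 ≤ k) :
    (s + 1) * (N - s) ≤ (k - s) * (N - k + s + 1) := by
  obtain ⟨d, rfl⟩ := Nat.exists_eq_add_of_le hs
  obtain ⟨e, rfl⟩ := Nat.exists_eq_add_of_le hk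
  rw [show 2 * s + 1 + d + e - s = s + 1 + d + e by omega,
    show 2 * s + 1 + d - s = s + 1 + d by omega, show 2 * s + 1 + d + e - (2 * s + 1 + d) = e by omega]
  nlinarith

theorem A_nonneg (N k s : ℕ) : 0 ≤ A N k s := by
  unfold A; positivity

theorem A_sq (N k s : ℕ) :
    A N k s ^ 2 = (2 ^ (N - k)) ^ 2 * (k.choose s : ℝ) ^ 2 / (N.choose s * N.choose (k - s)) := by
  rw [A, div_pow, mul_pow, Real.sq_sqrt (by positivity)]

theorem A_succ_sq_mul {N k s : ℕ} (hsk : s < k) (hk : k ≤ N) :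
    A N k (s + 1) ^ 2 * ((s + 1) * (N - s) : ℕ) =
      A N k s ^ 2 * ((k - s) * (N - k + s + 1) : ℕ) := by
  have hks : ((k.choose (s + 1) * (s + 1) : ℕ) : ℝ) = (k.choose s * (k - s) : ℕ) :=
    congrArg Nat.cast (Nat.choose_succ_right_eq k s)
  have hNs : ((N.choose (s + 1) * (s + 1) : ℕ) : ℝ) = (N.choose s * (N - s) : ℕ) :=
    congrArg Nat.cast (Nat.choose_succ_right_eq N s)
  have hNks : ((N.choose (k - s) * (k - s) : ℕ) : ℝ) =
      (N.choose (k - (s + 1)) * (N - k + s + 1) : ℕ) := by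
    congr 1
    rw [show k - s = k - (s + 1) + 1 by omega, Nat.choose_succ_right_eq,
      show N - (k - (s + 1)) = N - k + s + 1 by omega]
  have hne : ∀ m ≤ N, (N.choose m : ℝ) ≠ 0 := fun m hm =>
    Nat.cast_ne_zero.2 (Nat.choose_pos hm).ne'
  rw [A_sq, A_sq]
  field_simp [hne s (by omega), hne (s + 1) (by omega), hne (k - s) (by omega),
    hne (k - (s + 1)) (by omega)]
  push_cast at hks hNs hNks ⊢
  linear_combination -(k.choose (s + 1) : ℝ) ^ 2 * (s + 1) * N.choose (k - s) * hNs
    + (N.choose (s + 1) : ℝ) * N.choose (k - s)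
        * (k.choose (s + 1) * (s + 1) + k.choose s * (k - s : ℕ)) * hks
    + (k.choose s : ℝ) ^ 2 * (k - s : ℕ) * N.choose (s + 1) * hNks

theorem stmt2_general (N k s : ℕ) (h : k < N) (hs : 2 * (s + 1) ≤ k) :
    A N k s ≤ A N k (s + 1) := by
  have hP : 0 < (s + 1) * (N - s) := Nat.mul_pos s.succ_pos (by omega)
  have hsq : A N k s ^ 2 ≤ A N k (s + 1) ^ 2 := by
    refine le_of_mul_le_mul_right ?_ (Nat.cast_pos.2 hP : (0 : ℝ) < _)
    rw [A_succ_sq_mul (show s < k by omega) h.le]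
    gcongr A N k s ^ 2 * (?_ : ℕ)
    exact succ_mul_sub_le_sub_mul h.le (show 2 * s + 1 ≤ k by omega)
  exact (sq_le_sq₀ (A_nonneg N k s) (A_nonneg N k (s + 1))).1 hsq

theorem stmt2 (N k s : ℕ) (h0 : 0 < k) (h : k < N) (hs : 2 * (s + 1) ≤ k) :
    A N k s ≤ A N k (s + 1) :=
  stmt2_general N k s h hs
end

section
/- For natural numbers N, k with 0 < k < N, the maximum over s ∈ {0,...,k} of A(N,k,s) := 2^(N-k) * C(k,s) / sqrt(C(N,s) * C(N,k-s)) is attained at s = ⌊k/2⌋ (and also at s = ⌈k/2⌉). -/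
namespace Nat

theorem add_choose_mul_add_choose_succ_le {m i j : ℕ} (hij : i ≤ j) :
    (m + i).choose i * (m + (j + 1)).choose (j + 1) ≤
      (m + (i + 1)).choose (i + 1) * (m + j).choose j := by
  have hi := add_one_mul_choose_eq (m + i) i
  have hj := add_one_mul_choose_eq (m + j) j
  rw [← add_assoc] at *
  refine Nat.le_of_mul_le_mul_right (c := (i + 1) * (j + 1)) ?_ (by positivity)
  have key : (i + 1) * (m + j + 1) ≤ (m + i + 1) * (j + 1) := by nlinarith
  calc (m + i).choose i * (m + j + 1).choose (j + 1) * ((i + 1) * (j + 1))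
      = (m + i).choose i * (m + j).choose j * ((i + 1) * (m + j + 1)) := by
        linear_combination (m + i).choose i * (i + 1) * hj.symm
    _ ≤ (m + i).choose i * (m + j).choose j * ((m + i + 1) * (j + 1)) :=
        Nat.mul_le_mul_left _ key
    _ = (m + i + 1).choose (i + 1) * (m + j).choose j * ((i + 1) * (j + 1)) := by
        linear_combination (m + j).choose j * (j + 1) * hi

end Nat

def balancedChooseProd (m k s : ℕ) : ℕ :=
  (m + s).choose s * (m + (k - s)).choose (k - s)

theorem balancedChooseProd_sub_self {m k s : ℕ} (hs : s ≤ k) :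
    balancedChooseProd m k (k - s) = balancedChooseProd m k s := by
  rw [balancedChooseProd, balancedChooseProd, Nat.sub_sub_self hs, mul_comm]

theorem balancedChooseProd_le_succ {m k s : ℕ} (hs : 2 * (s + 1) ≤ k) :
    balancedChooseProd m k s ≤ balancedChooseProd m k (s + 1) := by
  have hks : k - s = k - (s + 1) + 1 := by omega
  rw [balancedChooseProd, balancedChooseProd, hks]
  exact Nat.add_choose_mul_add_choose_succ_le (by omega)

theorem balancedChooseProd_mono {m k s t : ℕ} (hst : s ≤ t) (ht : 2 * t ≤ k) :
    balancedChooseProd m k s ≤ balancedChooseProd m k t := by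
  induction t, hst using Nat.le_induction with
  | base => rfl
  | succ t _ ih => exact (ih (by omega)).trans (balancedChooseProd_le_succ ht)

theorem sq_choose_mul_choose_eq {N k s : ℕ} (hs : s ≤ k) (hk : k ≤ N) :
    (N.choose k * k.choose s) ^ 2 =
      N.choose s * N.choose (k - s) * balancedChooseProd (N - k) k s := by
  have h₁ := Nat.choose_mul (n := N) hs
  have h₂ := Nat.choose_mul (n := N) (Nat.sub_le k s)
  rw [Nat.choose_symm hs, Nat.sub_sub_self hs] at h₂
  have e₁ : N - s = N - k + (k - s) := by omega
  have e₂ : N - (k - s) = N - k + s := by omega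
  rw [balancedChooseProd, sq]
  nth_rw 1 [h₁]
  rw [h₂, e₁, e₂]
  ring

theorem A_eq_sqrt_balancedChooseProd {N k s : ℕ} (hs : s ≤ k) (hk : k ≤ N) :
    A N k s = 2 ^ (N - k) * Real.sqrt (balancedChooseProd (N - k) k s) / N.choose k := by
  have hN : (0 : ℝ) < N.choose k := by exact_mod_cast Nat.choose_pos hk
  have hQ : (0 : ℝ) < N.choose s * N.choose (k - s) := by
    have := Nat.choose_pos (hs.trans hk)
    have := Nat.choose_pos ((Nat.sub_le k s).trans hk)
    positivity
  have hsq : (N.choose k * k.choose s : ℝ) =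
      Real.sqrt (N.choose s * N.choose (k - s)) * Real.sqrt (balancedChooseProd (N - k) k s) := by
    rw [← Real.sqrt_mul hQ.le,
      ← Real.sqrt_sq (by positivity : (0 : ℝ) ≤ N.choose k * k.choose s)]
    exact_mod_cast congrArg (Real.sqrt ∘ Nat.cast) (sq_choose_mul_choose_eq hs hk)
  rw [A, div_eq_div_iff (Real.sqrt_pos.2 hQ).ne' hN.ne']
  linear_combination (2 : ℝ) ^ (N - k) * hsq

theorem stmt4_general (N k : ℕ) (h : k < N) :
    (∀ s ≤ k, A N k s ≤ A N k (k / 2)) ∧ A N k (k / 2) = A N k ((k + 1) / 2) := by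
  have hA : ∀ s ≤ k, A N k s =
      2 ^ (N - k) * Real.sqrt (balancedChooseProd (N - k) k s) / N.choose k :=
    fun s hs => A_eq_sqrt_balancedChooseProd hs h.le
  refine ⟨fun s hs => ?_, ?_⟩
  · have hP : balancedChooseProd (N - k) k s ≤ balancedChooseProd (N - k) k (k / 2) := by
      rcases le_or_gt s (k / 2) with hs' | hs'
      · exact balancedChooseProd_mono hs' (by omega)
      · rw [← balancedChooseProd_sub_self hs]
        exact balancedChooseProd_mono (by omega) (by omega)
    rw [hA s hs, hA (k / 2) (by omega)]
    gcongr
  · have hceil : (k + 1) / 2 = k - k / 2 := by omega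
    rw [hceil, hA _ (by omega), hA _ (by omega), balancedChooseProd_sub_self (by omega)]

/-- The maximum of `A N k ·` on `{0,…,k}` is attained at `⌊k/2⌋` and also at `⌈k/2⌉`. -/
theorem stmt4 (N k : ℕ) (h0 : 0 < k) (h : k < N) :
    (∀ s ≤ k, A N k s ≤ A N k (k / 2)) ∧ A N k (k / 2) = A N k ((k + 1) / 2) :=
  stmt4_general N k h
end

section
/- For even k ≥ 2, the maximal violation factor V(N,k) := A(N,k,k/2)/(2·2^((N-k-1)/2)) is strictly increasing in N whenever N > (2+√2)·k/2 − 1, and V(N,k) → ∞ as N → ∞ for fixed k. -/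
/-- V(N,k) = A(N,k,k/2) · 2^(−(N−k+1)/2), the maximal MABK violation factor. -/
noncomputable def V (N k : ℕ) : ℝ :=
  A N k (k / 2) * (2 : ℝ) ^ (-(((N : ℝ) - k + 1) / 2))

/-!
Writing `k = 2 * s`, the square root in `A N k s` is just `C(N, s)`, so that
`V N k = C(k, s) / C(N, s) * 2 ^ ((N - k - 1) / 2)` once `k ≤ N`. Since
`C(N + 1, s) * (N + 1 - s) = C(N, s) * (N + 1)`, consecutive values have ratio
`√2 * (1 - s / (N + 1))`, which exceeds `1` exactly when `(2 + √2) * s < N + 1`.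
For `N ≥ 2 * k` this ratio is bounded below by its value at `N = 2 * k`, a constant
greater than `1`, so `V N k` grows geometrically.
-/

open Filter Real

section

variable {N k s : ℕ}

lemma V_eq (hs : k = 2 * s) (hkN : k ≤ N) :
    V N k = (k.choose s : ℝ) / (N.choose s : ℝ) * 2 ^ (((N : ℝ) - k - 1) / 2) := by
  have hpow : (2 : ℝ) ^ (N - k) = 2 ^ ((N : ℝ) - k) := by
    rw [← Nat.cast_sub hkN, rpow_natCast]
  unfold V A
  rw [show k / 2 = s by omega, show k - s = s by omega, sqrt_mul_self (Nat.cast_nonneg _),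
    hpow, show ((N : ℝ) - k - 1) / 2 = ((N : ℝ) - k) + -(((N : ℝ) - k + 1) / 2) by ring,
    rpow_add two_pos]
  ring

lemma V_pos (hs : k = 2 * s) (hkN : k ≤ N) : 0 < V N k := by
  have : 0 < (N.choose s : ℝ) := by exact_mod_cast Nat.choose_pos (by omega)
  have : 0 < (k.choose s : ℝ) := by exact_mod_cast Nat.choose_pos (by omega)
  rw [V_eq hs hkN]
  positivity

lemma V_succ (hs : k = 2 * s) (hkN : k ≤ N) :
    V (N + 1) k = √2 * (1 - s / ((N : ℝ) + 1)) * V N k := by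
  have hchoose :
      (N.choose s : ℝ) * ((N : ℝ) + 1) = ((N + 1).choose s : ℝ) * ((N : ℝ) + 1 - s) := by
    rw [← Nat.cast_add_one, ← Nat.cast_sub (by omega), ← Nat.cast_mul, ← Nat.cast_mul,
      Nat.choose_mul_succ_eq]
  have hchoose_pos : 0 < (N.choose s : ℝ) := by exact_mod_cast Nat.choose_pos (by omega)
  have hchoose_succ_pos : 0 < ((N + 1).choose s : ℝ) := by
    exact_mod_cast Nat.choose_pos (by omega)
  have hhalf :
      (2 : ℝ) ^ ((((N + 1 : ℕ) : ℝ) - k - 1) / 2) = √2 * 2 ^ (((N : ℝ) - k - 1) / 2) := by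
    rw [sqrt_eq_rpow, ← rpow_add two_pos]
    push_cast
    ring_nf
  rw [V_eq hs hkN, V_eq hs (by omega), hhalf]
  field_simp
  linear_combination (k.choose s : ℝ) * hchoose

end

lemma one_lt_sqrt_two_mul_one_sub_div_iff {x s : ℝ} (hx : 0 < x) :
    1 < √2 * (1 - s / x) ↔ (2 + √2) * s < x := by
  have h2 : √2 ^ 2 = 2 := sq_sqrt zero_le_two
  have h1 : 1 < √2 := by nlinarith [sqrt_nonneg 2]
  rw [mul_one_sub, mul_div_assoc', lt_sub_iff_add_lt, ← lt_sub_iff_add_lt', div_lt_iff₀ hx]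
  constructor <;> intro h <;> nlinarith

theorem stmt9_general (k : ℕ) (hke : Even k) :
    (∀ N : ℕ, (2 + Real.sqrt 2) * k / 2 - 1 < (N : ℝ) → V N k < V (N + 1) k) ∧
    Filter.Tendsto (fun N : ℕ => V N k) Filter.atTop Filter.atTop := by
  obtain ⟨s, hs⟩ := hke
  replace hs : k = 2 * s := by omega
  have hks : (k : ℝ) = 2 * s := by exact_mod_cast hs
  constructor
  · intro N hN
    have hthreshold : (2 + √2) * s < (N : ℝ) + 1 := by rw [hks] at hN; linarith
    have hkN : k ≤ N := by
      have : (k : ℝ) < N + 1 := by nlinarith [sqrt_nonneg 2]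
      exact Nat.lt_succ_iff.mp (by exact_mod_cast this)
    rw [V_succ hs hkN]
    exact lt_mul_left (V_pos hs hkN)
      ((one_lt_sqrt_two_mul_one_sub_div_iff (by positivity)).2 hthreshold)
  · have hc : 1 < √2 * (1 - s / ((2 * k : ℕ) + 1 : ℝ)) := by
      refine (one_lt_sqrt_two_mul_one_sub_div_iff (by positivity)).2 ?_
      have : √2 < 2 := by rw [sqrt_lt' two_pos]; norm_num
      push_cast
      nlinarith
    rw [← tendsto_add_atTop_iff_nat (2 * k)]
    refine tendsto_atTop_of_geom_le (V_pos hs (by omega)) hc fun n => ?_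
    rw [Nat.add_right_comm, V_succ hs (by omega)]
    have hV := V_pos hs (by omega : k ≤ n + 2 * k)
    gcongr
    linarith

theorem stmt9 (k : ℕ) (hk : 2 ≤ k) (hke : Even k) :
    (∀ N : ℕ, (2 + Real.sqrt 2) * k / 2 - 1 < (N : ℝ) → V N k < V (N + 1) k) ∧
    Filter.Tendsto (fun N : ℕ => V N k) Filter.atTop Filter.atTop :=
  stmt9_general k hke
end

section
/- For every positive integer k there exists N such that the violation factor A(N,k,⌊k/2⌋)/(2·2^((N-k-1)/2)) > 1, i.e., the maximal quantum value of the (N−k)-party MABK expectation on a permutation-invariant N-qubit state exceeds the local bound. -/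
open Filter

lemma Nat.choose_mul_choose_sub_le_pow {N k s : ℕ} (hs : s ≤ k) :
    N.choose s * N.choose (k - s) ≤ N ^ k :=
  calc N.choose s * N.choose (k - s) ≤ N ^ s * N ^ (k - s) :=
        Nat.mul_le_mul (Nat.choose_le_pow _ _) (Nat.choose_le_pow _ _)
    _ = N ^ k := by rw [← pow_add, Nat.add_sub_cancel' hs]

lemma eventually_pow_lt_two_pow_sub (k : ℕ) :
    ∀ᶠ N : ℕ in atTop, N ^ k < 2 ^ (N - k - 1) := by
  have hsmall : ∀ᶠ N : ℕ in atTop, (N : ℝ) ^ k / 2 ^ N < (2 ^ (k + 1))⁻¹ :=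
    (tendsto_pow_const_div_const_pow_of_one_lt k one_lt_two).eventually
      (gt_mem_nhds (by positivity))
  filter_upwards [hsmall, eventually_gt_atTop k] with N hN hkN
  have hsplit : 2 ^ N = 2 ^ (N - k - 1) * 2 ^ (k + 1) := by
    rw [← pow_add]; congr 1; omega
  have hreal : (N : ℝ) ^ k * 2 ^ (k + 1) < 2 ^ N := by
    rwa [div_lt_iff₀ (by positivity), inv_mul_eq_div, lt_div_iff₀ (by positivity)] at hN
  have hnat : N ^ k * 2 ^ (k + 1) < 2 ^ (N - k - 1) * 2 ^ (k + 1) := by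
    rw [← hsplit]; exact_mod_cast hreal
  exact Nat.lt_of_mul_lt_mul_right hnat

lemma two_rpow_lt_half_A {N k s : ℕ} (hs : s ≤ k) (hkN : k < N)
    (h : N.choose s * N.choose (k - s) < 2 ^ (N - k - 1)) :
    (2 : ℝ) ^ (((N : ℝ) - k - 1) / 2) < 1 / 2 * A N k s := by
  set e := N - k - 1
  set P : ℝ := (N.choose s : ℝ) * (N.choose (k - s) : ℝ)
  have hP : 0 < P := by
    have := Nat.choose_pos (n := N) (k := s) (by omega)
    have := Nat.choose_pos (n := N) (k := k - s) (by omega)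
    positivity
  have hPe : P < 2 ^ e := by unfold P; exact_mod_cast h
  have hC : (1 : ℝ) ≤ k.choose s := by exact_mod_cast Nat.choose_pos hs
  have hlhs : (2 : ℝ) ^ (((N : ℝ) - k - 1) / 2) = √(2 ^ e) := by
    have he : (N : ℝ) - k - 1 = e := by
      rw [show e = N - (k + 1) by omega, Nat.cast_sub (by omega)]; push_cast; ring
    rw [he, Real.sqrt_eq_rpow, ← Real.rpow_natCast, ← Real.rpow_mul zero_le_two]
    ring_nf
  have hA : 1 / 2 * A N k s = 2 ^ e * k.choose s / √P := by
    rw [A, show N - k = e + 1 by omega, pow_succ]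
    ring
  rw [hlhs, hA, lt_div_iff₀ (Real.sqrt_pos.mpr hP)]
  calc √(2 ^ e) * √P = √(2 ^ e * P) := (Real.sqrt_mul (by positivity) P).symm
    _ < √(2 ^ e * 2 ^ e) := Real.sqrt_lt_sqrt (by positivity) (by gcongr)
    _ = 2 ^ e := Real.sqrt_mul_self (by positivity)
    _ ≤ 2 ^ e * k.choose s := le_mul_of_one_le_right (by positivity) hC

theorem stmt10_general (k : ℕ) :
    ∃ N : ℕ, 2 * k < N ∧
      (1 / 2) * A N k (k / 2) > (2 : ℝ) ^ (((N : ℝ) - k - 1) / 2) := by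
  obtain ⟨N, hpow, hN⟩ :=
    ((eventually_pow_lt_two_pow_sub k).and (eventually_gt_atTop (2 * k))).exists
  have hs : k / 2 ≤ k := Nat.div_le_self k 2
  exact ⟨N, hN, two_rpow_lt_half_A hs (by omega)
    ((Nat.choose_mul_choose_sub_le_pow hs).trans_lt hpow)⟩

theorem stmt10 (k : ℕ) (hk : 1 ≤ k) :
    ∃ N : ℕ, 2 * k < N ∧
      (1 / 2) * A N k (k / 2) > (2 : ℝ) ^ (((N : ℝ) - k - 1) / 2) :=
  stmt10_general k
end

section
/- The interval ( N/2^((N−1)/2), 1/2 + 2^(−N/2)·√(2^(N−2) − N) ) is nonempty for all natural N ≥ 7, and empty for N ≤ 6; hence 2-hyper-polygamy of the state family is possible exactly when N ≥ 7. -/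
/-!
With `t = 2 ^ (N / 2)` the inequality reads `N √2 < t / 2 + √(t² / 4 - N)`. Isolating the square
root and squaring, it is equivalent to `2N + 1 < √2 t`, i.e. to `(2N + 1)² < 2 ^ (N + 1)`. This
fails for `N = 5, 6` (`121 > 64`, `169 > 128`), holds for `N = 7` (`225 < 256`), and then persists
because the right side doubles while the left side grows by a factor less than two.
-/

open Real

lemma mul_sqrt_two_lt_half_add_sqrt_iff {c t : ℝ} (hc : 1 ≤ c) (ht : 0 < t) :
    c * √2 < t / 2 + √(t ^ 2 / 4 - c) ↔ (2 * c + 1) ^ 2 < 2 * t ^ 2 := by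
  have hsq2 : √2 ^ 2 = 2 := sq_sqrt zero_le_two
  rw [← sub_lt_iff_lt_add']
  rcases lt_or_ge (c * √2 - t / 2) 0 with hneg | hnonneg
  · -- `(2c + 1)² ≤ 16c² = 8 (c √2)² < 8 (t / 2)² = 2t²`
    have hsq_lt : (c * √2) ^ 2 < (t / 2) ^ 2 :=
      pow_lt_pow_left₀ (by linarith) (by positivity) two_ne_zero
    exact iff_of_true (hneg.trans_le (sqrt_nonneg _)) (by nlinarith)
  calc c * √2 - t / 2 < √(t ^ 2 / 4 - c)
      ↔ (c * √2 - t / 2) ^ 2 < t ^ 2 / 4 - c := lt_sqrt hnonneg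
    _ ↔ c * (2 * c + 1) < c * (√2 * t) := by
        rw [← sub_pos, ← sub_pos (b := c * (2 * c + 1))]
        congr! 1
        linear_combination (-c ^ 2) * hsq2
    _ ↔ 2 * c + 1 < √2 * t := mul_lt_mul_iff_right₀ (by linarith)
    _ ↔ (2 * c + 1) ^ 2 < (√2 * t) ^ 2 :=
        (pow_lt_pow_iff_left₀ (by linarith) (by positivity) two_ne_zero).symm
    _ ↔ (2 * c + 1) ^ 2 < 2 * t ^ 2 := by rw [mul_pow, hsq2]

lemma div_two_rpow_lt_half_add_iff {x : ℝ} (hx : 1 ≤ x) :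
    x / (2 : ℝ) ^ ((x - 1) / 2) < 1 / 2 + (2 : ℝ) ^ (-x / 2) * √((2 : ℝ) ^ (x - 2) - x) ↔
      (2 * x + 1) ^ 2 < (2 : ℝ) ^ (x + 1) := by
  set t : ℝ := (2 : ℝ) ^ (x / 2) with ht
  have htpos : 0 < t := rpow_pos_of_pos two_pos _
  have hsq : t ^ 2 = (2 : ℝ) ^ x := by
    rw [ht, ← rpow_natCast, ← rpow_mul zero_le_two]
    norm_num
  have h₁ : (2 : ℝ) ^ ((x - 1) / 2) = t / √2 := by
    rw [ht, sqrt_eq_rpow, ← rpow_sub two_pos]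
    ring_nf
  have h₂ : (2 : ℝ) ^ (-x / 2) = t⁻¹ := by
    rw [ht, ← rpow_neg zero_le_two]
    ring_nf
  have h₃ : (2 : ℝ) ^ (x - 2) = t ^ 2 / 4 := by
    rw [hsq, rpow_sub two_pos]
    norm_num
  have h₄ : (2 : ℝ) ^ (x + 1) = 2 * t ^ 2 := by
    rw [hsq, rpow_add two_pos, rpow_one, mul_comm]
  rw [h₁, h₂, h₃, h₄, ← mul_sqrt_two_lt_half_add_sqrt_iff hx htpos, div_div_eq_mul_div,
    div_lt_iff₀ htpos]
  congr! 1
  field_simp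

lemma sq_two_mul_add_one_lt_two_pow {n : ℕ} (hn : 7 ≤ n) : (2 * n + 1) ^ 2 < 2 ^ (n + 1) := by
  induction n, hn using Nat.le_induction with
  | base => norm_num
  | succ n hn ih =>
    calc (2 * (n + 1) + 1) ^ 2 ≤ 2 * (2 * n + 1) ^ 2 := by nlinarith
      _ < 2 * 2 ^ (n + 1) := by omega
      _ = 2 ^ (n + 1 + 1) := by ring

theorem stmt13 (N : ℕ) (h : 5 ≤ N) :
    (N : ℝ) / (2 : ℝ) ^ (((N : ℝ) - 1) / 2) <
      1 / 2 + (2 : ℝ) ^ (-(N : ℝ) / 2) * Real.sqrt ((2 : ℝ) ^ ((N : ℝ) - 2) - N) ↔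
    7 ≤ N := by
  rw [div_two_rpow_lt_half_add_iff (by exact_mod_cast (by omega : 1 ≤ N)),
    show (N : ℝ) + 1 = ((N + 1 : ℕ) : ℝ) by push_cast; ring, rpow_natCast]
  norm_cast
  refine ⟨fun hlt => ?_, sq_two_mul_add_one_lt_two_pow⟩
  by_contra! h7
  interval_cases N <;> norm_num at hlt
end

section
/- The symmetrized ladder operator identity on n qubits: sym[σ₋^⊗(n−k) ⊗ 1^⊗k] = k!·S₋^(n−k), where S₋ = ∑ᵢ σ₋^(i), sym denotes the sum over all n! permutation conjugations, and σ₋ is the 2×2 matrix with a single 1 in the (0,1) entry. -/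
/-- The lowering operator σ₋ = |0⟩⟨1| acting on qubit `i` of `n` qubits
(identity on the remaining qubits). -/
noncomputable def sigmaMinusAt (n : ℕ) (i : Fin n) :
    Matrix (Fin n → Fin 2) (Fin n → Fin 2) ℂ :=
  fun x y => if x i = 0 ∧ y i = 1 ∧ ∀ j, j ≠ i → x j = y j then 1 else 0

/-- The collective lowering operator S₋ = ∑ᵢ σ₋⁽ⁱ⁾. -/
noncomputable def Sminus (n : ℕ) : Matrix (Fin n → Fin 2) (Fin n → Fin 2) ℂ :=
  ∑ i, sigmaMinusAt n i

/-- The operator σ₋^⊗(n−k) ⊗ 1^⊗k : σ₋ on the first n−k qubits, identity on the rest. -/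
noncomputable def sigmaMinusBlock (n k : ℕ) :
    Matrix (Fin n → Fin 2) (Fin n → Fin 2) ℂ :=
  fun x y =>
    if (∀ i : Fin n, (i : ℕ) < n - k → (x i = 0 ∧ y i = 1)) ∧
        (∀ i : Fin n, n - k ≤ (i : ℕ) → x i = y i) then 1 else 0

/-- The symmetrization sym[O] = ∑_{P ∈ Sₙ} P O P†, where permutations act by
permuting the tensor factors. -/
noncomputable def symOp (n : ℕ) (O : Matrix (Fin n → Fin 2) (Fin n → Fin 2) ℂ) :
    Matrix (Fin n → Fin 2) (Fin n → Fin 2) ℂ :=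
  fun x y => ∑ P : Equiv.Perm (Fin n), O (x ∘ P) (y ∘ P)

/-! In the computational basis both sides are counting matrices. Lowering one qubit at a time,
the entry of `S₋ ^ m` at `(x, y)` is `m!` when `x ≤ y` coordinatewise at Hamming distance `m`
(each of the `m` differing qubits may come first), and `0` otherwise. The entry of
`sym[σ₋^⊗m ⊗ 1^⊗k]` at `(x, y)` is nonzero under the same condition, and then counts the
permutations carrying the first `m` qubits onto the `m` positions where `x` and `y` differ:
there are `m! · k!` of them. -/

open Finset Function Equiv Nat

section PermCount

variable {α ι : Type*} [Fintype α] [DecidableEq α]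

theorem Equiv.Perm.card_comp_eq [Fintype ι] [DecidableEq ι] {f g : α → ι}
    (e : ∀ i, {a // g a = i} ≃ {a // f a = i}) :
    Fintype.card {P : Perm α // f ∘ P = g} = ∏ i, (Fintype.card {a // g a = i})! := by
  set P₀ := ofFiberEquiv e
  have hP₀ : f ∘ P₀ = g := funext (ofFiberEquiv_map e)
  rw [← DomMulAct.stabilizer_card g]
  -- `f ∘ P = g` iff `P₀⁻¹ * P` stabilises `g`
  refine Fintype.card_congr (subtypeEquiv (Equiv.mulLeft P₀⁻¹) fun P => ?_)
  rw [← hP₀]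
  simp [funext_iff]

theorem Equiv.Perm.card_preimage_eq (S T : Finset α) :
    Nat.card {P : Perm α // ∀ a, P a ∈ T ↔ a ∈ S} =
      if #S = #T then (#S)! * (Fintype.card α - #S)! else 0 := by
  rw [Nat.card_eq_fintype_card]
  split_ifs with h
  · have hfiber (U : Finset α) (b : Bool) :
        Fintype.card {a // decide (a ∈ U) = b} = cond b #U (Fintype.card α - #U) := by
      cases b <;> simp [Fintype.card_subtype_compl]
    have e (b : Bool) : {a // decide (a ∈ S) = b} ≃ {a // decide (a ∈ T) = b} :=
      Fintype.equivOfCardEq (by simp only [hfiber, h])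
    have hcomp (P : Perm α) : (∀ a, P a ∈ T ↔ a ∈ S) ↔
        (fun a => decide (a ∈ T)) ∘ P = fun a => decide (a ∈ S) := by
      simp [funext_iff]
    rw [Fintype.card_congr (subtypeEquivRight hcomp), Perm.card_comp_eq e, Fintype.prod_bool]
    simp only [hfiber, cond_true, cond_false]
  · rw [Fintype.card_eq_zero_iff]
    exact ⟨fun P => h (card_equiv P.1 fun a => (P.2 a).symm)⟩

end PermCount

section Hamming

variable {ι : Type*} [Fintype ι] [DecidableEq ι]

theorem hammingDist_eq_hammingDist_update_add_one {β : ι → Type*} [∀ i, DecidableEq (β i)]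
    {x y : ∀ i, β i} {i : ι} (h : x i ≠ y i) :
    hammingDist x y = hammingDist (update x i (y i)) y + 1 := by
  have hdiff : ({j | update x i (y i) j ≠ y j} : Finset ι) =
      ({j | x j ≠ y j} : Finset ι).erase i := by
    ext j
    by_cases hj : j = i
    · subst hj; simp
    · simp [hj]
  simp only [hammingDist, hdiff]
  rw [card_erase_add_one (by simpa using h)]

theorem update_le_and_hammingDist_eq_iff {x y : ι → Fin 2} {i : ι} {m : ℕ} :
    (x i = 0 ∧ (∀ j, update x i 1 j ≤ y j) ∧ hammingDist (update x i 1) y = m) ↔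
      ((∀ j, x j ≤ y j) ∧ hammingDist x y = m + 1) ∧ x i ≠ y i := by
  have hle_iff (hx : x i = 0) (hy : y i = 1) :
      (∀ j, update x i 1 j ≤ y j) ↔ ∀ j, x j ≤ y j := by
    refine forall_congr' fun j => ?_
    by_cases hj : j = i
    · subst hj; simp only [update_self, hx, hy, Fin.zero_le, le_refl]
    · rw [update_of_ne hj]
  constructor
  · rintro ⟨hx, hle, hd⟩
    have hy : y i = 1 := by have := hle i; rw [update_self] at this; omega
    have hne : x i ≠ y i := by omega
    refine ⟨⟨(hle_iff hx hy).1 hle, ?_⟩, hne⟩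
    rw [hammingDist_eq_hammingDist_update_add_one hne, hy, hd]
  · rintro ⟨⟨hle, hd⟩, hne⟩
    have hx : x i = 0 := by have := hle i; omega
    have hy : y i = 1 := by have := hle i; omega
    rw [hammingDist_eq_hammingDist_update_add_one hne, hy] at hd
    exact ⟨hx, (hle_iff hx hy).2 hle, by omega⟩

end Hamming

theorem sigmaMinusAt_mul_apply {n : ℕ} (i : Fin n)
    (M : Matrix (Fin n → Fin 2) (Fin n → Fin 2) ℂ) (x y : Fin n → Fin 2) :
    (sigmaMinusAt n i * M) x y = if x i = 0 then M (update x i 1) y else 0 := by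
  have hσ (z : Fin n → Fin 2) :
      sigmaMinusAt n i x z = if update x i 1 = z ∧ x i = 0 then 1 else 0 := by
    simp only [sigmaMinusAt, update_eq_iff, eq_comm (a := (1 : Fin 2))]
    exact if_congr (by tauto) rfl rfl
  simp only [Matrix.mul_apply, hσ, ite_and, ite_mul, one_mul, zero_mul]
  exact Fintype.sum_ite_eq (update x i 1) fun z => if x i = 0 then M z y else 0

theorem sminus_pow_apply (n m : ℕ) (x y : Fin n → Fin 2) :
    (Sminus n ^ m) x y =
      if (∀ i, x i ≤ y i) ∧ hammingDist x y = m then (m ! : ℂ) else 0 := by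
  induction m generalizing x with
  | zero =>
    simp only [pow_zero, Matrix.one_apply, hammingDist_eq_zero, factorial_zero, cast_one]
    exact if_congr ⟨fun h => ⟨fun i => (congrFun h i).le, h⟩, And.right⟩ rfl rfl
  | succ m ih =>
    rw [_root_.pow_succ', Sminus, Finset.sum_mul, Matrix.sum_apply, ← Sminus]
    simp only [sigmaMinusAt_mul_apply, ih, ← ite_and, update_le_and_hammingDist_eq_iff]
    by_cases hA : (∀ j, x j ≤ y j) ∧ hammingDist x y = m + 1
    · have hcard : #{i | x i ≠ y i} = m + 1 := hA.2
      simp only [and_iff_right hA]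
      rw [if_pos hA, ← Finset.sum_filter, Finset.sum_const, hcard, factorial_succ, nsmul_eq_mul,
        cast_mul]
    · simp only [hA, false_and, if_false, Finset.sum_const_zero]

theorem sigmaMinusBlock_apply (n k : ℕ) (x y : Fin n → Fin 2) :
    sigmaMinusBlock n k x y =
      if (∀ i, x i ≤ y i) ∧ ∀ i, x i ≠ y i ↔ (i : ℕ) < n - k then 1 else 0 := by
  refine if_congr ?_ rfl rfl
  rw [← forall_and, ← forall_and]
  refine forall_congr' fun i => ?_
  by_cases hi : (i : ℕ) < n - k
  · simp only [hi, true_implies, iff_true, not_le.2 hi, false_implies, and_true]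
    omega
  · simp only [hi, false_implies, iff_false, not_not, le_of_not_gt hi, true_implies, true_and]
    omega

theorem symOp_sigmaMinusBlock_apply {n k : ℕ} (hk : k ≤ n) (x y : Fin n → Fin 2) :
    symOp n (sigmaMinusBlock n k) x y =
      if (∀ i, x i ≤ y i) ∧ hammingDist x y = n - k then ((n - k)! * k ! : ℂ) else 0 := by
  have hle_iff (P : Perm (Fin n)) : (∀ i, x (P i) ≤ y (P i)) ↔ ∀ j, x j ≤ y j :=
    P.forall_congr_right (q := fun j => x j ≤ y j)
  have hdiff_iff (P : Perm (Fin n)) : (∀ i, x (P i) ≠ y (P i) ↔ (i : ℕ) < n - k) ↔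
      ∀ i, P i ∈ ({j | x j ≠ y j} : Finset (Fin n)) ↔
        i ∈ ({i : Fin n | (i : ℕ) < n - k} : Finset (Fin n)) := by
    simp
  simp only [symOp, sigmaMinusBlock_apply, comp_apply, hle_iff]
  by_cases hle : ∀ j, x j ≤ y j
  · simp only [and_iff_right hle]
    rw [Finset.sum_boole, Finset.filter_congr fun P _ => hdiff_iff P, ← Fintype.card_subtype,
      ← Nat.card_eq_fintype_card, Perm.card_preimage_eq, Fin.card_filter_val_lt,
      min_eq_right (Nat.sub_le n k), Fintype.card_fin, Nat.sub_sub_self hk]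
    change ((if n - k = hammingDist x y then _ else 0 : ℕ) : ℂ) = _
    rw [Nat.cast_ite, Nat.cast_mul, Nat.cast_zero]
    exact if_congr eq_comm rfl rfl
  · simp only [hle, false_and, if_false, Finset.sum_const_zero]

/-- sym[σ₋^⊗(n−k) ⊗ 1^⊗k] = k! · S₋^(n−k). -/
theorem stmt17 (n k : ℕ) (h : k < n) :
    symOp n (sigmaMinusBlock n k) = (Nat.factorial k : ℂ) • (Sminus n) ^ (n - k) := by
  ext x y
  rw [Matrix.smul_apply, sminus_pow_apply, symOp_sigmaMinusBlock_apply h.le, smul_eq_mul,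
    mul_ite, mul_zero, mul_comm]
end
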